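/- arXiv:2512.13455 — 2 statements merged into one kernel-verified Lean document; each statement's English description precedes it below -/
import Mathlib

section
/- Let Ā ∈ M_{r×(n+1)}(ℤ) and let V ∈ M_{n+1}(ℤ) be unimodular with ĀV = [I_r | 0]; write V = [V_𝔞 | V_𝔟] and W = V⁻¹ = [W_𝔞 ; W_𝔟]. Let F̄ = (F̄_0,…,F̄_n) with F̄_0 ≡ 1 and each F̄_i a T_Ā-invariant rational function of (z_0,…,z_n). Let I be an open interval with 0 ∉ I and suppose x : I → (ℝ∖{0})^r and y : I → (ℝ∖{0})^{n+1−r} are differentiable and satisfy, for all t ∈ I, dy_j/dt = (y_j(t)/t)·Σ_i F̄_i(y(t)^{W_𝔟})·(V_𝔟)_{i,j} and dx_k/dt = (x_k(t)/t)·Σ_i F̄_i(y(t)^{W_𝔟})·(V_𝔞)_{i,k}. Define z̄(t) := (x(t), y(t))^W, i.e. z̄_i(t) = ∏_k x_k(t)^{(W_𝔞)_{k,i}} · ∏_l y_l(t)^{(W_𝔟)_{l,i}} for i = 0,…,n. Then there exists c ∈ ℝ∖{0} such that z̄_0(t) = c·t for all t ∈ I, and the curve Z(t) := (z̄_1(t/c),…,z̄_n(t/c)),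 defined for t ∈ c·I, satisfies dZ_i/dt = (Z_i(t)/t)·F̄_i(t, Z(t)) for all t ∈ c·I and all i ≥ 1. -/
/-!
Write `u = (x, y)`. The reduced system says that the logarithmic derivative of `u` is
`(F̄ ᵥ* V) / t`, and logarithmic derivatives turn the monomial map `u ↦ u^W` into the linear
map `ᵥ* W`, so the logarithmic derivative of `z̄ = u^W` is `F̄ ᵥ* V ᵥ* W / t = F̄ / t`.
Since `ĀV = [I | 0]` forces `Ā = W_𝔞`, we have `z̄ = x^Ā * y^{W_𝔟}`, and `T_Ā`-invariance gives
`F̄(y^{W_𝔟}) = F̄(z̄)`. As `F̄₀ = 1`, the quotient `z̄₀ / t` has derivative zero, so `z̄₀ = c t` on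
the interval; finally the Euler-type system `z' = (z / t) F̄(z)` is invariant under `t ↦ t / c`.
-/

noncomputable def mpow {ι κ : Type*} [Fintype ι] (x : ι → ℝ) (A : Matrix ι κ ℤ) : κ → ℝ :=
  fun j => ∏ i, x i ^ A i j

open Matrix

section Monomial

variable {ι ι' κ : Type*} [Fintype ι]

lemma mpow_ne_zero {x : ι → ℝ} (hx : ∀ i, x i ≠ 0) (A : Matrix ι κ ℤ) (j : κ) :
    mpow x A j ≠ 0 :=
  Finset.prod_ne_zero_iff.mpr fun i _ => zpow_ne_zero _ (hx i)

lemma mpow_sum_elim [Fintype ι'] (a : ι → ℝ) (b : ι' → ℝ) (W : Matrix (ι ⊕ ι') κ ℤ) :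
    mpow (Sum.elim a b) W =
      fun j => mpow a (W.submatrix Sum.inl id) j * mpow b (W.submatrix Sum.inr id) j :=
  funext fun j => by simp [mpow, Fintype.prod_sum_type]

lemma hasDerivAt_mpow {h : ℝ → ι → ℝ} {t : ℝ} {g : ι → ℝ}
    (hd : ∀ k, HasDerivAt (fun s => h s k) (h t k * g k) t) (hnz : ∀ k, h t k ≠ 0)
    (A : Matrix ι κ ℤ) (j : κ) :
    HasDerivAt (fun s => mpow (h s) A j)
      (mpow (h t) A j * (g ᵥ* (A.map (↑) : Matrix ι κ ℝ)) j) t := by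
  classical
  have hfactor : ∀ k, HasDerivAt (fun s => h s k ^ A k j)
      ((A k j : ℝ) * h t k ^ (A k j - 1) * (h t k * g k)) t :=
    fun k => ((hasDerivAt_zpow (A k j) (h t k) (Or.inl (hnz k))).comp t (hd k) :)
  refine (HasDerivAt.fun_finsetProd fun k _ => hfactor k).congr_deriv ?_
  rw [vecMul, dotProduct, Finset.mul_sum]
  refine Finset.sum_congr rfl fun k _ => ?_
  rw [mpow, smul_eq_mul, ← Finset.prod_erase_mul _ _ (Finset.mem_univ k), zpow_sub_one₀ (hnz k)]
  simp only [map_apply]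
  field_simp [hnz k]

lemma hasDerivAt_mpow_of_mul_eq_one [Fintype κ] [DecidableEq κ] {V : Matrix κ ι ℤ}
    {W : Matrix ι κ ℤ} (hVW : V * W = 1) {u : ℝ → ι → ℝ} {t : ℝ} {G : κ → ℝ}
    (hu : ∀ k, HasDerivAt (fun s => u s k) (u t k / t * ∑ i, G i * V i k) t)
    (hnz : ∀ k, u t k ≠ 0) (l : κ) :
    HasDerivAt (fun s => mpow (u s) W l) (mpow (u t) W l / t * G l) t := by
  have hlog : ∀ k, HasDerivAt (fun s => u s k)
      (u t k * ((t⁻¹ • G) ᵥ* (V.map (↑) : Matrix κ ι ℝ)) k) t := fun k => by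
    convert hu k using 1
    simp only [vecMul, dotProduct, map_apply, Pi.smul_apply, smul_eq_mul, Finset.mul_sum]
    exact Finset.sum_congr rfl fun i _ => by ring
  have hVW' : (V.map (↑) : Matrix κ ι ℝ) * (W.map (↑) : Matrix ι κ ℝ) = 1 := by
    simpa [hVW] using (Matrix.map_mul (L := V) (M := W) (f := Int.castRingHom ℝ)).symm
  convert hasDerivAt_mpow hlog hnz W l using 1
  rw [vecMul_vecMul, hVW', vecMul_one, Pi.smul_apply, smul_eq_mul]
  ring

end Monomial

lemma exists_ne_zero_eq_mul_of_hasDerivAt_div {I : Set ℝ} (hIo : IsOpen I)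
    (hIc : IsPreconnected I) (h0 : (0 : ℝ) ∉ I) {f : ℝ → ℝ} (hf0 : ∀ t ∈ I, f t ≠ 0)
    (hf : ∀ t ∈ I, HasDerivAt f (f t / t) t) :
    ∃ c ≠ 0, ∀ t ∈ I, f t = c * t := by
  obtain rfl | ⟨t₀, ht₀⟩ := I.eq_empty_or_nonempty
  · exact ⟨1, one_ne_zero, fun t ht => ht.elim⟩
  have hne : ∀ t ∈ I, t ≠ 0 := fun t ht h => h0 (h ▸ ht)
  have hquot : ∀ t ∈ I, HasDerivAt (fun s => f s / s) 0 t := fun t ht => by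
    refine ((hf t ht).fun_div (hasDerivAt_id' t) (hne t ht)).congr_deriv ?_
    field_simp [hne t ht]
    ring
  obtain ⟨c, hc⟩ := hIo.exists_is_const_of_deriv_eq_zero hIc
    (fun t ht => (hquot t ht).differentiableAt.differentiableWithinAt)
    (fun t ht => (hquot t ht).deriv)
  have hfc : ∀ t ∈ I, f t = c * t := fun t ht => by rw [← hc t ht, div_mul_cancel₀ _ (hne t ht)]
  exact ⟨c, fun hc0 => hf0 t₀ ht₀ (by simp [hfc t₀ ht₀, hc0]), hfc⟩

lemma HasDerivAt.comp_div_const_of_euler {f : ℝ → ℝ} {c t a : ℝ} (hc : c ≠ 0)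
    (hf : HasDerivAt f (f (t / c) / (t / c) * a) (t / c)) :
    HasDerivAt (fun s => f (s / c)) (f (t / c) / t * a) t := by
  refine (hf.comp t ((hasDerivAt_id' t).div_const c)).congr_deriv ?_
  field_simp

lemma eq_submatrix_inl_of_mul_eq_fromCols {m n p R : Type*} [Fintype m] [Fintype n] [Fintype p]
    [DecidableEq m] [DecidableEq n] [Semiring R] {A : Matrix m n R} {V : Matrix n (m ⊕ p) R}
    {W : Matrix (m ⊕ p) n R} (hVW : V * W = 1) (hAV : A * V = fromCols 1 0) :
    A = W.submatrix Sum.inl id := by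
  calc A = A * V * W := by rw [Matrix.mul_assoc, hVW, Matrix.mul_one]
    _ = fromCols (1 : Matrix m m R) (0 : Matrix m p R) * fromRows W.toRows₁ W.toRows₂ := by
      rw [hAV, fromRows_toRows]
    _ = W.submatrix Sum.inl id := by rw [fromCols_mul_fromRows]; simp; rfl

theorem recovered_solution_general (n r p : ℕ)
    (Abar : Matrix (Fin r) (Fin (n + 1)) ℤ)
    (V : Matrix (Fin (n + 1)) (Fin r ⊕ Fin p) ℤ)
    (W : Matrix (Fin r ⊕ Fin p) (Fin (n + 1)) ℤ)
    (hVW : V * W = 1)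
    (hAV : Abar * V = Matrix.fromCols 1 0)
    (F : Fin n → (Fin (n + 1) → ℝ) → ℝ)
    (hinv : ∀ (i : Fin n) (lam : Fin r → ℝ), (∀ k, lam k ≠ 0) →
      ∀ zz : Fin (n + 1) → ℝ, (∀ l, zz l ≠ 0) →
        F i (fun l => mpow lam Abar l * zz l) = F i zz)
    (I : Set ℝ) (hIopen : IsOpen I) (hIconv : Convex ℝ I) (h0I : (0 : ℝ) ∉ I)
    (x : ℝ → Fin r → ℝ) (y : ℝ → Fin p → ℝ)
    (hxnz : ∀ t ∈ I, ∀ k, x t k ≠ 0) (hynz : ∀ t ∈ I, ∀ j, y t j ≠ 0)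
    (hodey : ∀ t ∈ I, ∀ j : Fin p,
      HasDerivAt (fun s => y s j)
        ((y t j / t) *
          ∑ i : Fin (n + 1),
            (Fin.cons (fun _ => (1 : ℝ)) F : Fin (n + 1) → (Fin (n + 1) → ℝ) → ℝ) i
                (mpow (y t) (W.submatrix Sum.inr id)) *
              (V i (Sum.inr j) : ℝ)) t)
    (hodex : ∀ t ∈ I, ∀ k : Fin r,
      HasDerivAt (fun s => x s k)
        ((x t k / t) *
          ∑ i : Fin (n + 1),
            (Fin.cons (fun _ => (1 : ℝ)) F : Fin (n + 1) → (Fin (n + 1) → ℝ) → ℝ) i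
                (mpow (y t) (W.submatrix Sum.inr id)) *
              (V i (Sum.inl k) : ℝ)) t) :
    ∃ c : ℝ, c ≠ 0 ∧ (∀ t ∈ I, mpow (Sum.elim (x t) (y t)) W 0 = c * t) ∧
      ∀ t : ℝ, t / c ∈ I → ∀ i : Fin n,
        HasDerivAt (fun s => mpow (Sum.elim (x (s / c)) (y (s / c))) W i.succ)
          ((mpow (Sum.elim (x (t / c)) (y (t / c))) W i.succ / t) *
            F i (Fin.cons t (fun j => mpow (Sum.elim (x (t / c)) (y (t / c))) W j.succ))) t := by
  set z : ℝ → Fin (n + 1) → ℝ := fun t => mpow (Sum.elim (x t) (y t)) W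
  have hunz : ∀ t ∈ I, ∀ s, Sum.elim (x t) (y t) s ≠ 0 := fun t ht s =>
    s.rec (hxnz t ht) (hynz t ht)
  have hz : ∀ t ∈ I, ∀ l, HasDerivAt (fun s => z s l)
      (z t l / t * (Fin.cons (fun _ => (1 : ℝ)) F : Fin (n + 1) → _ → ℝ) l
        (mpow (y t) (W.submatrix Sum.inr id))) t := fun t ht =>
    hasDerivAt_mpow_of_mul_eq_one hVW (fun s => s.rec (hodex t ht) (hodey t ht))
      (hunz t ht)
  have hFz : ∀ t ∈ I, ∀ i, F i (mpow (y t) (W.submatrix Sum.inr id)) = F i (z t) := by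
    intro t ht i
    show _ = F i (mpow (Sum.elim (x t) (y t)) W)
    rw [mpow_sum_elim, ← eq_submatrix_inl_of_mul_eq_fromCols hVW hAV]
    exact (hinv i _ (hxnz t ht) _ (mpow_ne_zero (hynz t ht) _)).symm
  obtain ⟨c, hcne, hc⟩ := exists_ne_zero_eq_mul_of_hasDerivAt_div hIopen
    hIconv.isPreconnected h0I (f := fun t => z t 0) (fun t ht => mpow_ne_zero (hunz t ht) W 0)
    fun t ht => by simpa using hz t ht 0
  refine ⟨c, hcne, hc, fun t ht i => ?_⟩
  have hzt : (Fin.cons t fun j => z (t / c) j.succ : Fin (n + 1) → ℝ) = z (t / c) := by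
    refine funext (Fin.cases ?_ fun j => rfl)
    simp [hc _ ht, mul_div_cancel₀ t hcne]
  rw [hzt, ← hFz _ ht]
  exact HasDerivAt.comp_div_const_of_euler hcne (hz _ ht i.succ)

/-- Hubert–Labahn, Theorem 6.5(2).  With `Ā`, `V = [V_𝔞 | V_𝔟]`,
`W = V⁻¹ = [W_𝔞 ; W_𝔟]` and invariant `F̄ = (1, F₁, …, F_n)` as before, if `x, y` solve
the reduced system with nonvanishing components, and `z̄(t) := (x(t), y(t))^W`, then
`z̄₀(t) = c·t` for some nonzero constant `c`, and `Z(t) := (z̄₁(t/c), …, z̄_n(t/c))` solves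
the original system `dZ_i/dt = (Z_i/t)·F̄_i(t, Z(t))` on `c·I`. -/
theorem recovered_solution (n r p : ℕ) (hn : n + 1 = r + p)
    (Abar : Matrix (Fin r) (Fin (n + 1)) ℤ)
    (V : Matrix (Fin (n + 1)) (Fin r ⊕ Fin p) ℤ)
    (W : Matrix (Fin r ⊕ Fin p) (Fin (n + 1)) ℤ)
    (hVW : V * W = 1) (hWV : W * V = 1)
    (hAV : Abar * V = Matrix.fromCols 1 0)
    (F : Fin n → (Fin (n + 1) → ℝ) → ℝ)
    (hinv : ∀ (i : Fin n) (lam : Fin r → ℝ), (∀ k, lam k ≠ 0) →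
      ∀ zz : Fin (n + 1) → ℝ, (∀ l, zz l ≠ 0) →
        F i (fun l => mpow lam Abar l * zz l) = F i zz)
    (I : Set ℝ) (hIopen : IsOpen I) (hIconv : Convex ℝ I) (h0I : (0 : ℝ) ∉ I)
    (x : ℝ → Fin r → ℝ) (y : ℝ → Fin p → ℝ)
    (hxnz : ∀ t ∈ I, ∀ k, x t k ≠ 0) (hynz : ∀ t ∈ I, ∀ j, y t j ≠ 0)
    (hodey : ∀ t ∈ I, ∀ j : Fin p,
      HasDerivAt (fun s => y s j)
        ((y t j / t) *
          ∑ i : Fin (n + 1),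
            (Fin.cons (fun _ => (1 : ℝ)) F : Fin (n + 1) → (Fin (n + 1) → ℝ) → ℝ) i
                (mpow (y t) (W.submatrix Sum.inr id)) *
              (V i (Sum.inr j) : ℝ)) t)
    (hodex : ∀ t ∈ I, ∀ k : Fin r,
      HasDerivAt (fun s => x s k)
        ((x t k / t) *
          ∑ i : Fin (n + 1),
            (Fin.cons (fun _ => (1 : ℝ)) F : Fin (n + 1) → (Fin (n + 1) → ℝ) → ℝ) i
                (mpow (y t) (W.submatrix Sum.inr id)) *
              (V i (Sum.inl k) : ℝ)) t) :
    ∃ c : ℝ, c ≠ 0 ∧ (∀ t ∈ I, mpow (Sum.elim (x t) (y t)) W 0 = c * t) ∧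
      ∀ t : ℝ, t / c ∈ I → ∀ i : Fin n,
        HasDerivAt (fun s => mpow (Sum.elim (x (s / c)) (y (s / c))) W i.succ)
          ((mpow (Sum.elim (x (t / c)) (y (t / c))) W i.succ / t) *
            F i (Fin.cons t (fun j => mpow (Sum.elim (x (t / c)) (y (t / c))) W j.succ))) t :=
  recovered_solution_general n r p Abar V W hVW hAV F hinv I hIopen hIconv h0I x y hxnz hynz hodey
    hodex
end

section
/- Let A ∈ M_{r×n}(ℤ) and let V ∈ M_n(ℤ) be unimodular with A·V = [I_r | 0]; write V = [V_𝔞 | V_𝔟] (first r and last n−r columns) and W = V⁻¹ = [W_𝔞 ; W_𝔟] (first r and last n−r rows). Let f be a function of n nonzero real variables that is T_A-invariant. Then f(z) = f((z^{V_𝔟})^{W_𝔟}) for every z ∈ (ℝ∖{0})^n at which both sides are defined. Equivalently, every rational invariant of the scaling action of A can be rewritten as a function of the n−r generating invariants y = z^{V_𝔟} via the substitution z ↦ y^{W_𝔟}. -/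
/-!
Writing `y = z^V`, unimodularity gives `z = z^(V W) = y^W = (y_𝔞)^(W_𝔞) * (y_𝔟)^(W_𝔟)`.
From `A V = [I | 0]` we get `A = A V W = W_𝔞`, so the first factor is the action of the torus
element `λ = y_𝔞` on `(y_𝔟)^(W_𝔟)`, and `T_A`-invariance of `f` removes it.
-/

open Matrix

theorem zpow_sum₀ {ι G₀ : Type*} [CommGroupWithZero G₀] {x : G₀} (hx : x ≠ 0)
    (s : Finset ι) (c : ι → ℤ) : x ^ (∑ i ∈ s, c i) = ∏ i ∈ s, x ^ c i := by
  classical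
  induction s using Finset.induction with
  | empty => simp
  | insert _ _ h ih => rw [Finset.sum_insert h, Finset.prod_insert h, zpow_add₀ hx, ih]

section MonomialMap

variable {ι κ μ G₀ : Type*} [CommGroupWithZero G₀]

/-- The paper's `x^M`. -/
def monomialMap [Fintype ι] (M : Matrix ι κ ℤ) (x : ι → G₀) : κ → G₀ :=
  fun j => ∏ i, x i ^ M i j

theorem monomialMap_ne_zero [Fintype ι] (M : Matrix ι κ ℤ) {x : ι → G₀} (hx : ∀ i, x i ≠ 0)
    (j : κ) : monomialMap M x j ≠ 0 :=
  Finset.prod_ne_zero_iff.mpr fun i _ => zpow_ne_zero _ (hx i)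

theorem monomialMap_one [Fintype ι] [DecidableEq ι] (x : ι → G₀) :
    monomialMap (1 : Matrix ι ι ℤ) x = x := by
  funext j
  rw [monomialMap, Finset.prod_eq_single j (fun i _ hij => by simp [one_apply_ne hij])
    (by simp)]
  simp

theorem monomialMap_monomialMap [Fintype ι] [Fintype κ] (M : Matrix ι κ ℤ) (N : Matrix κ μ ℤ)
    {x : ι → G₀} (hx : ∀ i, x i ≠ 0) :
    monomialMap N (monomialMap M x) = monomialMap (M * N) x := by
  funext l
  calc ∏ j, (∏ i, x i ^ M i j) ^ N j l
      = ∏ j, ∏ i, x i ^ (M i j * N j l) := by simp only [← Finset.prod_zpow, _root_.zpow_mul]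
    _ = ∏ i, ∏ j, x i ^ (M i j * N j l) := Finset.prod_comm
    _ = ∏ i, x i ^ (M * N) i l := by simp only [mul_apply, zpow_sum₀ (hx _)]

theorem monomialMap_sum [Fintype ι] [Fintype κ] (M : Matrix (ι ⊕ κ) μ ℤ) (x : ι ⊕ κ → G₀) :
    monomialMap M x =
      monomialMap M.toRows₁ (x ∘ Sum.inl) * monomialMap M.toRows₂ (x ∘ Sum.inr) := by
  funext l
  exact Fintype.prod_sum_type _

end MonomialMap

theorem eq_toRows₁_of_mul_eq_fromCols_one_zero {m n p R : Type*} [Fintype m] [DecidableEq m]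
    [Fintype n] [DecidableEq n] [Fintype p] [Semiring R] {A : Matrix m n R} {V : Matrix n (m ⊕ p) R}
    {W : Matrix (m ⊕ p) n R} (hVW : V * W = 1) (hAV : A * V = fromCols 1 0) :
    A = W.toRows₁ :=
  calc A = A * V * W := by rw [Matrix.mul_assoc, hVW, Matrix.mul_one]
    _ = W.toRows₁ := by
      rw [hAV, ← fromRows_toRows W, fromCols_mul_fromRows]
      simp

theorem invariant_rewriting_general (n r p : ℕ)
    (A : Matrix (Fin r) (Fin n) ℤ)
    (V : Matrix (Fin n) (Fin r ⊕ Fin p) ℤ)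
    (W : Matrix (Fin r ⊕ Fin p) (Fin n) ℤ)
    (hVW : V * W = 1)
    (hAV : A * V = Matrix.fromCols 1 0)
    (f : (Fin n → ℝ) → ℝ)
    (hinv : ∀ (lam : Fin r → ℝ), (∀ k, lam k ≠ 0) →
      ∀ z : Fin n → ℝ, (∀ i, z i ≠ 0) →
        f (fun i => (∏ k, lam k ^ A k i) * z i) = f z)
    (z : Fin n → ℝ) (hz : ∀ i, z i ≠ 0) :
    f z = f (fun i =>
      ∏ j : Fin p, (∏ i' : Fin n, z i' ^ V i' (Sum.inr j)) ^ W (Sum.inr j) i) := by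
  obtain rfl : A = W.toRows₁ := eq_toRows₁_of_mul_eq_fromCols_one_zero hVW hAV
  set y := monomialMap V z
  have hy : ∀ s, y s ≠ 0 := monomialMap_ne_zero V hz
  calc f z = f (monomialMap W.toRows₁ (y ∘ Sum.inl) * monomialMap W.toRows₂ (y ∘ Sum.inr)) := by
        rw [← monomialMap_sum, monomialMap_monomialMap V W hz, hVW, monomialMap_one]
    _ = _ := hinv _ (fun _ => hy _) _ (monomialMap_ne_zero _ fun _ => hy _)

/-- rewriting invariants via generating invariants.  Let
`A ∈ M_{r×n}(ℤ)` and let `V` be unimodular with `A·V = [I_r | 0]`, `V = [V_𝔞 | V_𝔟]`,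
`W = V⁻¹ = [W_𝔞 ; W_𝔟]`.  If `f` is a `T_A`-invariant function of `n` nonzero real
variables, then `f(z) = f((z^{V_𝔟})^{W_𝔟})` for all `z` with nonzero entries: every
rational invariant can be rewritten in the generating invariants `y = z^{V_𝔟}` via
`z ↦ y^{W_𝔟}`. -/
theorem invariant_rewriting (n r p : ℕ) (hn : n = r + p)
    (A : Matrix (Fin r) (Fin n) ℤ)
    (V : Matrix (Fin n) (Fin r ⊕ Fin p) ℤ)
    (W : Matrix (Fin r ⊕ Fin p) (Fin n) ℤ)
    (hVW : V * W = 1) (hWV : W * V = 1)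
    (hAV : A * V = Matrix.fromCols 1 0)
    (f : (Fin n → ℝ) → ℝ)
    (hinv : ∀ (lam : Fin r → ℝ), (∀ k, lam k ≠ 0) →
      ∀ z : Fin n → ℝ, (∀ i, z i ≠ 0) →
        f (fun i => (∏ k, lam k ^ A k i) * z i) = f z)
    (z : Fin n → ℝ) (hz : ∀ i, z i ≠ 0) :
    f z = f (fun i =>
      ∏ j : Fin p, (∏ i' : Fin n, z i' ^ V i' (Sum.inr j)) ^ W (Sum.inr j) i) :=
  invariant_rewriting_general n r p A V W hVW hAV f hinv z hz
end
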